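/- arXiv:2301.10617 — 2 statements merged into one kernel-verified Lean document; each statement's English description precedes it below -/
import Mathlib

section
/- Let p be prime and let E be a finite family of unstructured extension polynomials of accuracy h over variables x and r, with |E| < e^{h/p}. Then for every assignment a ∈ F_p^N to the x-variables there exists an assignment b to the r-variables such that every polynomial in E evaluates to 0 at (a,b). (Soundness of unstructured extension polynomials.) -/
open Finset

lemma count_avoid (p h M : ℕ) (f : Fin h → Fin M) (hf : Function.Injective f)
    (v : Fin h → ZMod p) [NeZero p] :
    (Finset.univ.filter (fun b : Fin M → ZMod p => ∀ i, b (f i) ≠ v i)).card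
      = (p-1)^h * p^(M-h) := by
  classical
  set t : Fin M → Finset (ZMod p) :=
    fun j => Finset.univ \ ((Finset.univ.filter (fun i => f i = j)).image v) with ht
  have hset : (Finset.univ.filter (fun b : Fin M → ZMod p => ∀ i, b (f i) ≠ v i))
      = Fintype.piFinset t := by
    ext b
    simp only [mem_filter, mem_univ, true_and, Fintype.mem_piFinset, ht, mem_sdiff,
      mem_image, not_exists]
    constructor
    · rintro hb j i ⟨rfl, hv⟩
      exact hb i hv.symm
    · intro hb i hbi
      exact hb (f i) i ⟨rfl, hbi.symm⟩
  rw [hset, Fintype.card_piFinset]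
  set s := Finset.univ.image f with hsdef
  have hsc : s.card = h := by
    rw [hsdef, Finset.card_image_of_injective _ hf, Finset.card_univ, Fintype.card_fin]
  have hcard : ∀ j, (t j).card = if j ∈ s then p - 1 else p := by
    intro j
    by_cases hj : j ∈ s
    · simp only [hj, if_true]
      obtain ⟨i, -, rfl⟩ := mem_image.mp hj
      have h1 : (Finset.univ.filter (fun i' => f i' = f i)) = {i} := by
        ext i'; simp [hf.eq_iff]
      rw [ht]
      simp only [h1, image_singleton]
      rw [card_sdiff_of_subset (by simp)]
      simp [ZMod.card]
    · simp only [hj, if_false]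
      have h1 : (Finset.univ.filter (fun i' => f i' = j)) = ∅ := by
        ext i'; simp only [mem_filter, mem_univ, true_and, notMem_empty, iff_false]
        intro hi; exact hj (mem_image.mpr ⟨i', mem_univ _, hi⟩)
      rw [ht]; simp [h1, ZMod.card]
  rw [Finset.prod_congr rfl (fun j _ => hcard j)]
  rw [← Finset.prod_filter_mul_prod_filter_not Finset.univ (· ∈ s)]
  have h2 : Finset.univ.filter (· ∈ s) = s := by ext j; simp
  rw [h2]
  have e1 : (∏ x ∈ s, if x ∈ s then p-1 else p) = (p-1)^h := by
    rw [Finset.prod_congr rfl (fun x hx => if_pos hx), Finset.prod_const, hsc]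
  have e2 : (∏ x ∈ Finset.univ.filter (· ∉ s), if x ∈ s then p-1 else p) = p^(M-h) := by
    rw [Finset.prod_congr rfl (fun x hx => if_neg (mem_filter.mp hx).2), Finset.prod_const]
    congr 1
    rw [Finset.filter_not, Finset.card_sdiff_of_subset (Finset.filter_subset _ _), h2, hsc,
      Finset.card_univ, Fintype.card_fin]
  rw [e1, e2]

lemma key_ineq (p h c : ℕ) (hp : 2 ≤ p) (hc : (c:ℝ) < Real.exp ((h:ℝ)/p)) :
    c * (p-1)^h < p^h := by
  have hp0 : (0:ℝ) < p := by positivity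
  have h1 : ((p:ℝ)-1) ≤ p * Real.exp (-(1/p)) := by
    have h2 := Real.add_one_le_exp (-(1/(p:ℝ)))
    have h3 : (0:ℝ) < p := hp0
    have := mul_le_mul_of_nonneg_left h2 (le_of_lt h3)
    have hne : (p:ℝ) ≠ 0 := ne_of_gt h3
    calc ((p:ℝ)-1) = p * (-(1/p) + 1) := by field_simp; ring
      _ ≤ p * Real.exp (-(1/p)) := by exact mul_le_mul_of_nonneg_left h2 (le_of_lt h3)
  have hpm1 : (0:ℝ) ≤ (p:ℝ) - 1 := by
    have : (2:ℝ) ≤ p := by exact_mod_cast hp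
    linarith
  have h4 : ((p:ℝ)-1)^h ≤ (p:ℝ)^h * Real.exp (-(h:ℝ)/p) := by
    calc ((p:ℝ)-1)^h ≤ ((p:ℝ) * Real.exp (-(1/p)))^h := pow_le_pow_left₀ hpm1 h1 h
      _ = (p:ℝ)^h * Real.exp (-(1/p))^h := mul_pow _ _ _
      _ = (p:ℝ)^h * Real.exp (-(h:ℝ)/p) := by
          rw [← Real.exp_nat_mul]; ring_nf
  have key : (c:ℝ) * ((p:ℝ)-1)^h < (p:ℝ)^h := by
    have hc0 : (0:ℝ) ≤ c := Nat.cast_nonneg c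
    calc (c:ℝ) * ((p:ℝ)-1)^h ≤ (c:ℝ) * ((p:ℝ)^h * Real.exp (-(h:ℝ)/p)) := by
          exact mul_le_mul_of_nonneg_left h4 hc0
      _ < Real.exp ((h:ℝ)/p) * ((p:ℝ)^h * Real.exp (-(h:ℝ)/p)) := by
          apply mul_lt_mul_of_pos_right hc
          positivity
      _ = (p:ℝ)^h * (Real.exp ((h:ℝ)/p) * Real.exp (-(h:ℝ)/p)) := by ring
      _ = (p:ℝ)^h := by rw [← Real.exp_add]; simp [neg_div]
  have : ((c * (p-1)^h : ℕ) : ℝ) < ((p^h : ℕ) : ℝ) := by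
    push_cast [Nat.cast_sub (by omega : 1 ≤ p)]
    exact key
  exact_mod_cast this

set_option maxHeartbeats 1000000 in


/-- Soundness of unstructured extension polynomials.  Each member `e` of the finite
family `E` is a product `(g_{e,1} - r_{e,1}) ⋯ (g_{e,h} - r_{e,h})` where the
`r`-variables `idx e 1, …, idx e h` are pairwise distinct and do not occur in the
`g_{e,j}` (which depend only on the `x`-variables), but may occur in other members.
If `|E| < e^(h/p)`, then every assignment `a ∈ F_p^N` to the `x`-variables can be
extended by an assignment `b` to the `r`-variables making every member of `E`
vanish at `(a, b)`. -/
theorem stmt_2 (p N M h : ℕ) [Fact p.Prime] (hh : 1 ≤ h) {ι : Type} (E : Finset ι)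
    (G : ι → Fin h → (Fin N → ZMod p) → ZMod p) (idx : ι → Fin h → Fin M)
    (hinj : ∀ e ∈ E, Function.Injective (idx e))
    (hcard : (E.card : ℝ) < Real.exp ((h : ℝ) / p)) :
    ∀ a : Fin N → ZMod p, ∃ b : Fin M → ZMod p,
      ∀ e ∈ E, ∏ i, (G e i a - b (idx e i)) = 0 := by
  classical
  have hp := (Fact.out : p.Prime)
  have hpne : NeZero p := ⟨hp.ne_zero⟩
  intro a
  rcases E.eq_empty_or_nonempty with rfl | ⟨e0, he0⟩
  · exact ⟨0, by simp⟩
  have hMh : h ≤ M := by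
    have := Fintype.card_le_of_injective _ (hinj e0 he0)
    simpa using this
  by_contra hcon
  push_neg at hcon
  -- every b is "bad" for some e ∈ E
  have hsub : (Finset.univ : Finset (Fin M → ZMod p)) ⊆
      E.biUnion (fun e => Finset.univ.filter
        (fun b : Fin M → ZMod p => ∏ i, (G e i a - b (idx e i)) ≠ 0)) := by
    intro b _
    obtain ⟨e, he, hne⟩ := hcon b
    exact Finset.mem_biUnion.mpr ⟨e, he, Finset.mem_filter.mpr ⟨Finset.mem_univ _, hne⟩⟩
  have hfiltcard : ∀ e ∈ E, (Finset.univ.filter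
      (fun b : Fin M → ZMod p => ∏ i, (G e i a - b (idx e i)) ≠ 0)).card
      = (p-1)^h * p^(M-h) := by
    intro e he
    rw [← count_avoid p h M (idx e) (hinj e he) (fun i => G e i a)]
    congr 1
    apply Finset.filter_congr
    intro b _
    rw [Finset.prod_ne_zero_iff]
    constructor
    · intro hb i hbi
      exact hb i (Finset.mem_univ i) (by rw [hbi, sub_self])
    · intro hb i _ hzero
      exact hb i (by rwa [sub_eq_zero, eq_comm] at hzero)
  have hle : p^M ≤ E.card * ((p-1)^h * p^(M-h)) := by
    calc p^M = (Finset.univ : Finset (Fin M → ZMod p)).card := by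
          simp [Finset.card_univ, ZMod.card]
      _ ≤ (E.biUnion (fun e => Finset.univ.filter
            (fun b : Fin M → ZMod p => ∏ i, (G e i a - b (idx e i)) ≠ 0))).card :=
          Finset.card_le_card hsub
      _ ≤ ∑ e ∈ E, (Finset.univ.filter
            (fun b : Fin M → ZMod p => ∏ i, (G e i a - b (idx e i)) ≠ 0)).card :=
          Finset.card_biUnion_le
      _ = ∑ _e ∈ E, (p-1)^h * p^(M-h) := Finset.sum_congr rfl hfiltcard
      _ = E.card * ((p-1)^h * p^(M-h)) := by rw [Finset.sum_const, smul_eq_mul]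
  have hlt : E.card * (p-1)^h < p^h := key_ineq p h E.card hp.two_le hcard
  have : p^M < p^M := by
    calc p^M ≤ E.card * ((p-1)^h * p^(M-h)) := hle
      _ = (E.card * (p-1)^h) * p^(M-h) := by ring
      _ < p^h * p^(M-h) := by
          apply Nat.mul_lt_mul_of_lt_of_le hlt (le_refl _)
          exact pow_pos hp.pos _
      _ = p^M := by rw [← pow_add, Nat.add_sub_cancel' hMh]
  exact absurd this (lt_irrefl _)
end

section
/- If the system F of polynomials over F_p has a UENS-refutation, i.e. there exist h ≥ 1 and a set E of unstructured extension polynomials of accuracy h with |E| < e^{h/p} such that 1 lies in the ideal generated by F ∪ E ∪ {r^p - r : r extension variable} in F_p[x,r], then F has no common {0,1}-zero. -/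
/-!
Fix a common zero `a` of `F`. For one extension polynomial `∏ᵢ (gᵢ - rᵢ)`, the values `gᵢ(a, b)`
do not depend on the coordinates `b(rᵢ)`, so only `(p - 1)^h` of the `p^h` choices of those
coordinates make the product nonzero. By a union bound over the `K < e^{h/p}` members and
`(1 - 1/p)^h ≤ e^{-h/p}`, some `b ∈ F_p^M` makes all of them vanish. Every generator of the ideal
then vanishes at `(a, b)` (for `r^p - r` by Fermat), so `1` cannot lie in it.
-/
open MvPolynomial Finset Function

theorem card_filter_forall_apply_ne_le {R ι κ : Type*} [AddGroup R] [Fintype R] [DecidableEq R]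
    [Fintype ι] [DecidableEq ι] [Fintype κ] (idx : κ → ι) (hidx : Injective idx)
    (v : (ι → R) → κ → R) (hv : ∀ b b', (∀ s ∉ Set.range idx, b s = b' s) → v b = v b') :
    #{b | ∀ k, b (idx k) ≠ v b k} ≤
      (Fintype.card R - 1) ^ Fintype.card κ *
        Fintype.card R ^ (Fintype.card ι - Fintype.card κ) := by
  classical
  -- On the range of `idx`, `b` is recovered from its (nonzero) offset from `v b`, and `v b` only
  -- depends on `b` off the range.
  let f : {b : ι → R // ∀ k, b (idx k) ≠ v b k} →
      (κ → {x : R // x ≠ 0}) × ({s // s ∉ Set.range idx} → R) :=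
    fun b => (fun k => ⟨b.1 (idx k) - v b.1 k, sub_ne_zero.2 (b.2 k)⟩, fun s => b.1 s)
  have hf : Injective f := by
    rintro ⟨b, _⟩ ⟨b', _⟩ hbb'
    simp only [f, Prod.mk.injEq, _root_.funext_iff, Subtype.ext_iff, Subtype.forall] at hbb'
    obtain ⟨hon, hoff⟩ := hbb'
    have hvv : v b = v b' := hv b b' hoff
    ext s
    by_cases hs : s ∈ Set.range idx
    · obtain ⟨k, rfl⟩ := hs
      simpa [hvv] using hon k
    · exact hoff s hs
  calc #{b | ∀ k, b (idx k) ≠ v b k}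
      = Fintype.card {b : ι → R // ∀ k, b (idx k) ≠ v b k} := (Fintype.card_subtype _).symm
    _ ≤ _ := Fintype.card_le_of_injective f hf
    _ = _ := by
      simp only [Fintype.card_prod, Fintype.card_fun, Fintype.card_subtype_compl,
        Fintype.card_subtype_eq, Set.card_range_of_injective hidx]

theorem eval_eq_of_forall_mem_vars {σ R : Type*} [CommSemiring R] {P : MvPolynomial σ R}
    {c c' : σ → R} (h : ∀ i ∈ P.vars, c i = c' i) : eval c P = eval c' P :=
  eval₂Hom_congr' rfl (fun i hi _ => h i hi) rfl

theorem mul_sub_one_pow_lt_pow_of_lt_exp {q : ℕ} (hq : 1 ≤ q) {K h : ℕ}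
    (hK : (K : ℝ) < Real.exp (h / q)) : K * (q - 1) ^ h < q ^ h := by
  have hq' : (1 : ℝ) ≤ q := by exact_mod_cast hq
  have hexp : Real.exp (h / q) * ((q : ℝ) - 1) ^ h ≤ (q : ℝ) ^ h := by
    have hbase : (q : ℝ) - 1 ≤ q * Real.exp (-(1 / q)) := calc
      (q : ℝ) - 1 = q * (-(1 / q) + 1) := by field_simp; ring
      _ ≤ q * Real.exp (-(1 / q)) := by gcongr; exact Real.add_one_le_exp _
    calc Real.exp (h / q) * ((q : ℝ) - 1) ^ h
        ≤ Real.exp (h / q) * (q * Real.exp (-(1 / q))) ^ h := by gcongr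
      _ = (q : ℝ) ^ h := by
          rw [mul_pow, ← Real.exp_nat_mul, mul_left_comm, ← Real.exp_add]
          field_simp
          simp
  have hreal : (K : ℝ) * ((q : ℝ) - 1) ^ h < (q : ℝ) ^ h := by
    rcases (pow_nonneg (sub_nonneg.2 hq') h).eq_or_lt with hzero | hpos
    · rw [← hzero, mul_zero]; positivity
    · exact (mul_lt_mul_of_pos_right hK hpos).trans_le hexp
  rw [← Nat.cast_pred hq] at hreal
  exact_mod_cast hreal

theorem one_notMem_span_of_forall_eval_eq_zero {σ R : Type*} [CommRing R] [Nontrivial R]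
    {S : Set (MvPolynomial σ R)} (c : σ → R) (h : ∀ q ∈ S, eval c q = 0) :
    (1 : MvPolynomial σ R) ∉ Ideal.span S := fun h1 =>
  RingHom.ker_ne_top (eval c) <| (Ideal.eq_top_iff_one _).2 <|
    Ideal.span_le.2 (fun q hq => RingHom.mem_ker.2 (h q hq)) h1

theorem exists_forall_exists_apply_eq {R ι κ E : Type*} [AddGroup R] [Fintype R] [DecidableEq R]
    [Fintype ι] [DecidableEq ι] [Fintype κ] [Fintype E]
    (idx : E → κ → ι) (hidx : ∀ e, Injective (idx e)) (v : E → (ι → R) → κ → R)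
    (hv : ∀ e b b', (∀ s ∉ Set.range (idx e), b s = b' s) → v e b = v e b')
    (hcard : Fintype.card E * (Fintype.card R - 1) ^ Fintype.card κ <
      Fintype.card R ^ Fintype.card κ) :
    ∃ b : ι → R, ∀ e, ∃ k, b (idx e k) = v e b k := by
  by_contra! hbad
  obtain ⟨e₀, -⟩ := hbad 0
  have hκι : Fintype.card κ ≤ Fintype.card ι := Fintype.card_le_of_injective _ (hidx e₀)
  have hcover :
      (univ : Finset (ι → R)) ⊆ univ.biUnion fun e => {b | ∀ k, b (idx e k) ≠ v e b k} :=
    fun b _ => by simpa using hbad b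
  refine lt_irrefl (Fintype.card R ^ Fintype.card ι) ?_
  calc Fintype.card R ^ Fintype.card ι = #(univ : Finset (ι → R)) := by simp
    _ ≤ _ := card_le_card hcover
    _ ≤ ∑ e, #{b | ∀ k, b (idx e k) ≠ v e b k} := card_biUnion_le
    _ ≤ ∑ e : E, (Fintype.card R - 1) ^ Fintype.card κ *
          Fintype.card R ^ (Fintype.card ι - Fintype.card κ) :=
        sum_le_sum fun e _ => card_filter_forall_apply_ne_le (idx e) (hidx e) (v e) (hv e)
    _ = Fintype.card E * (Fintype.card R - 1) ^ Fintype.card κ *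
          Fintype.card R ^ (Fintype.card ι - Fintype.card κ) := by simp [mul_assoc]
    _ < Fintype.card R ^ Fintype.card κ * Fintype.card R ^ (Fintype.card ι - Fintype.card κ) :=
        Nat.mul_lt_mul_of_pos_right hcard (pow_pos Fintype.card_pos _)
    _ = Fintype.card R ^ Fintype.card ι := by rw [← pow_add, Nat.add_sub_cancel' hκι]

theorem stmt_5_general (p N M h K : ℕ) [Fact p.Prime]
    (F : Finset (MvPolynomial (Fin N) (ZMod p)))
    (G : Fin K → Fin h → MvPolynomial (Fin N ⊕ Fin M) (ZMod p))
    (idx : Fin K → Fin h → Fin M)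
    (hinj : ∀ e, Function.Injective (idx e))
    (hfresh : ∀ e i j, (Sum.inr (idx e i) : Fin N ⊕ Fin M) ∉ (G e j).vars)
    (hcard : (K : ℝ) < Real.exp ((h : ℝ) / p))
    (hcert : (1 : MvPolynomial (Fin N ⊕ Fin M) (ZMod p)) ∈ Ideal.span
      (((fun f => rename (Sum.inl : Fin N → Fin N ⊕ Fin M) f) '' (F : Set _)) ∪
       {q | ∃ e : Fin K, q = ∏ i, (G e i - X (Sum.inr (idx e i)))} ∪
       (Set.range fun s : Fin M =>
         (X (Sum.inr s) : MvPolynomial (Fin N ⊕ Fin M) (ZMod p)) ^ p - X (Sum.inr s)))) :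
    ¬ ∃ a : Fin N → ZMod p,
      (∀ i, a i = 0 ∨ a i = 1) ∧ ∀ f ∈ F, eval a f = 0 := by
  rintro ⟨a, -, haF⟩
  obtain ⟨b, hb⟩ := exists_forall_exists_apply_eq idx hinj
    (fun e b k => eval (Sum.elim a b) (G e k))
    (fun e b b' hbb' => funext fun k => eval_eq_of_forall_mem_vars fun
      | .inl _, _ => rfl
      | .inr s, hs => hbb' s (by rintro ⟨i, rfl⟩; exact hfresh e i k hs))
    (by simpa [ZMod.card] using mul_sub_one_pow_lt_pow_of_lt_exp (Fact.out : p.Prime).one_le hcard)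
  refine one_notMem_span_of_forall_eval_eq_zero (Sum.elim a b) ?_ hcert
  rintro q ((⟨f, hf, rfl⟩ | ⟨e, rfl⟩) | ⟨s, rfl⟩)
  · rw [eval_rename]
    exact haF f hf
  · obtain ⟨k, hk⟩ := hb e
    rw [map_prod]
    exact prod_eq_zero (mem_univ k) (by rw [map_sub, eval_X, Sum.elim_inr, hk, sub_self])
  · simp [ZMod.pow_card]

/-- Soundness of UENS.  `F ⊆ F_p[x₁,…,x_N]` contains all Boolean axioms
`x_i² - x_i`.  The extension set consists of `K` unstructured extension polynomials
of accuracy `h`: the `e`-th one is `∏_{i ≤ h} (g_{e,i} - r_{idx e i})` in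
`F_p[x,r]` (with `r`-variables indexed by `Fin M`), where the variables
`r_{idx e i}` are pairwise distinct and occur in no `g_{e,j}` of the same product
(but may occur in other members).  If `K < e^(h/p)` and `1` lies in the ideal
generated by `F` together with the extension polynomials and all `r^p - r`, then
`F` has no common `{0,1}`-zero. -/
theorem stmt_5 (p N M h K : ℕ) [Fact p.Prime] (hh : 1 ≤ h)
    (F : Finset (MvPolynomial (Fin N) (ZMod p)))
    (hbool : ∀ i : Fin N, (X i ^ 2 - X i) ∈ F)
    (G : Fin K → Fin h → MvPolynomial (Fin N ⊕ Fin M) (ZMod p))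
    (idx : Fin K → Fin h → Fin M)
    (hinj : ∀ e, Function.Injective (idx e))
    (hfresh : ∀ e i j, (Sum.inr (idx e i) : Fin N ⊕ Fin M) ∉ (G e j).vars)
    (hcard : (K : ℝ) < Real.exp ((h : ℝ) / p))
    (hcert : (1 : MvPolynomial (Fin N ⊕ Fin M) (ZMod p)) ∈ Ideal.span
      (((fun f => rename (Sum.inl : Fin N → Fin N ⊕ Fin M) f) '' (F : Set _)) ∪
       {q | ∃ e : Fin K, q = ∏ i, (G e i - X (Sum.inr (idx e i)))} ∪
       (Set.range fun s : Fin M =>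
         (X (Sum.inr s) : MvPolynomial (Fin N ⊕ Fin M) (ZMod p)) ^ p - X (Sum.inr s)))) :
    ¬ ∃ a : Fin N → ZMod p,
      (∀ i, a i = 0 ∨ a i = 1) ∧ ∀ f ∈ F, eval a f = 0 :=
  stmt_5_general p N M h K F G idx hinj hfresh hcard hcert
end
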